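/- Let Y be a locally compact Hausdorff topological space, U a topological space, I = [0,1] the unit interval, and E : I × U → Y a continuous map such that the track map I × U → I × Y, (t, u) ↦ (t, E(t,u)), is an open embedding. Then each slice E_t := E(t, ·) : U → Y is an open embedding, and the map H : I × OnePoint Y → OnePoint U defined by H(t, ∞) = ∞, H(t, y) = u whenever y = E(t, u), and H(t, y) = ∞ whenever y is not in the range of E_t, is continuous. In particular, the Pontryagin–Thom collapse maps of E_0 and of E_1 are homotopic as pointed maps OnePoint Y → OnePoint U. -/

import Mathlib

/-!
The map `H` is obtained from the open embedding `(t, u) ↦ (t, E (t, u))` of `I × U` into the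
Hausdorff space `I × OnePoint Y` by collapsing the complement of its range to `∞` and then
projecting to `U`. Since the projection `I × U → U` is proper, the preimage under `H` of an open
set of `U` is the image of an open set, and the preimage of a neighbourhood of `∞` is the
complement of the image of a compact set, which is closed.
-/

open scoped Classical unitInterval
open OnePoint

/-- The Pontryagin–Thom collapse map of a map `e : U → Y`: `∞ ↦ ∞`, `e u ↦ u`,
and every point outside the range of `e` goes to `∞`. -/
noncomputable def ptCollapse {U Y : Type*} (e : U → Y) : OnePoint Y → OnePoint U :=
  fun oy =>
    OnePoint.rec ∞ (fun y => if h : ∃ u, e u = y then (h.choose : OnePoint U) else ∞) oy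

/-- The levelwise Pontryagin–Thom collapse of a family `E : I × U → Y`:
at time `t` it is the collapse map of the slice `E (t, ·)`. -/
noncomputable def ptCollapseFamily {U Y : Type*} (E : unitInterval × U → Y) :
    unitInterval × OnePoint Y → OnePoint U :=
  fun p => ptCollapse (fun u => E (p.1, u)) p.2

open Set Topology

section Collapse

variable {A B Z : Type*} {f : A → Z} {p : A → B} {g : Z → OnePoint B}

lemma preimage_eq_image_preimage_of_infty_notMem (hf : Function.Injective f)
    (hg : ∀ a, g (f a) = p a) (hg' : ∀ z ∉ range f, g z = ∞) {s : Set (OnePoint B)}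
    (hs : ∞ ∉ s) : g ⁻¹' s = f '' (p ⁻¹' ((↑) ⁻¹' s)) := by
  ext z
  by_cases hz : z ∈ range f
  · obtain ⟨a, rfl⟩ := hz
    simp [hg, hf.mem_set_image]
  · have : z ∉ f '' (p ⁻¹' ((↑) ⁻¹' s)) := fun ⟨a, _, ha⟩ => hz ⟨a, ha⟩
    simp [hg' z hz, hs, this]

theorem continuous_collapse_of_isOpenEmbedding_of_isProperMap [TopologicalSpace A]
    [TopologicalSpace B] [TopologicalSpace Z] [T2Space Z]
    (hf : IsOpenEmbedding f) (hp : IsProperMap p)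
    (hg : ∀ a, g (f a) = p a) (hg' : ∀ z ∉ range f, g z = ∞) : Continuous g := by
  refine continuous_def.mpr fun s hs => ?_
  by_cases hinf : ∞ ∈ s
  · have hK : IsCompact ((↑) ⁻¹' s : Set B)ᶜ := ((isOpen_iff_of_mem' hinf).mp hs).1
    have hcompl : ∞ ∉ sᶜ := fun h => h hinf
    rw [← compl_compl s, preimage_compl,
      preimage_eq_image_preimage_of_infty_notMem hf.injective hg hg' hcompl, preimage_compl]
    exact ((hp.isCompact_preimage hK).image hf.continuous).isClosed.isOpen_compl
  · rw [preimage_eq_image_preimage_of_infty_notMem hf.injective hg hg' hinf]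
    exact hf.isOpenMap _ (((isOpen_iff_of_notMem hinf).mp hs).preimage hp.continuous)

end Collapse

section PTCollapse

variable {U Y : Type*} {e : U → Y}

lemma ptCollapse_coe_apply_of_injective (he : Function.Injective e) (u : U) :
    ptCollapse e (e u) = u := by
  have hex : ∃ v, e v = e u := ⟨u, rfl⟩
  change (if h : ∃ v, e v = e u then (h.choose : OnePoint U) else ∞) = u
  rw [dif_pos hex, he hex.choose_spec]

lemma ptCollapse_coe_of_notMem_range {y : Y} (hy : y ∉ range e) : ptCollapse e y = ∞ :=
  dif_neg hy

end PTCollapse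

lemma isOpenEmbedding_slice_of_isOpenEmbedding_track {T U Y : Type*} [TopologicalSpace T]
    [TopologicalSpace U] [TopologicalSpace Y] {E : T × U → Y}
    (h : IsOpenEmbedding fun p : T × U => (p.1, E p)) (t : T) :
    IsOpenEmbedding fun u => E (t, u) := by
  have hemb : IsEmbedding (Prod.mk t ∘ fun u => E (t, u)) :=
    h.isEmbedding.comp (isEmbedding_prodMkRight t)
  refine ⟨(isEmbedding_prodMkRight t).of_comp_iff.mp hemb, ?_⟩
  have hrange : range (fun u => E (t, u)) = Prod.mk t ⁻¹' range fun p : T × U => (p.1, E p) := by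
    ext y
    simp [Prod.ext_iff, eq_comm]
  rw [hrange]
  exact h.isOpen_range.preimage (Continuous.prodMk_right t)

theorem ptCollapse_isotopy_homotopy_general {U Y : Type*} [TopologicalSpace U]
    [TopologicalSpace Y] [LocallyCompactSpace Y] [T2Space Y]
    (E : unitInterval × U → Y)
    (htrack : Topology.IsOpenEmbedding (fun p : unitInterval × U => (p.1, E p))) :
    (∀ t : unitInterval, Topology.IsOpenEmbedding (fun u => E (t, u))) ∧
    Continuous (ptCollapseFamily E) ∧
    (∀ t : unitInterval, ptCollapseFamily E (t, ∞) = ∞) ∧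
    (∀ (t : unitInterval) (u : U),
      ptCollapseFamily E (t, (E (t, u) : OnePoint Y)) = (u : OnePoint U)) ∧
    (∀ (t : unitInterval) (y : Y), (¬ ∃ u, E (t, u) = y) →
      ptCollapseFamily E (t, (y : OnePoint Y)) = ∞) ∧
    (∀ oy : OnePoint Y, ptCollapseFamily E (0, oy) = ptCollapse (fun u => E (0, u)) oy) ∧
    (∀ oy : OnePoint Y, ptCollapseFamily E (1, oy) = ptCollapse (fun u => E (1, u)) oy) := by
  have hslice := isOpenEmbedding_slice_of_isOpenEmbedding_track htrack
  have hval (t : unitInterval) (u : U) :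
      ptCollapseFamily E (t, (E (t, u) : OnePoint Y)) = u :=
    ptCollapse_coe_apply_of_injective (hslice t).injective u
  have hvalInf (t : unitInterval) (y : Y) (hy : ¬ ∃ u, E (t, u) = y) :
      ptCollapseFamily E (t, (y : OnePoint Y)) = ∞ :=
    ptCollapse_coe_of_notMem_range hy
  have hcont : Continuous (ptCollapseFamily E) := by
    refine continuous_collapse_of_isOpenEmbedding_of_isProperMap
      ((IsOpenEmbedding.id.prodMap isOpenEmbedding_coe).comp htrack)
      isProperMap_snd_of_compactSpace (fun p => hval p.1 p.2) ?_
    rintro ⟨t, oy⟩ hz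
    induction oy with
    | infty => rfl
    | coe y => exact hvalInf t y fun ⟨u, hu⟩ => hz ⟨(t, u), by simp [hu]⟩
  exact ⟨hslice, hcont, fun _ => rfl, hval, hvalInf, fun _ => rfl, fun _ => rfl⟩

/-- Applying the Pontryagin–Thom construction to an isotopy yields a homotopy:
if `Y` is locally compact Hausdorff and `E : I × U → Y` is continuous with the
track map `(t, u) ↦ (t, E (t, u))` an open embedding, then each slice
`E (t, ·)` is an open embedding, the levelwise collapse map
`H : I × OnePoint Y → OnePoint U` (with `H (t, ∞) = ∞`, `H (t, E (t, u)) = u`,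
and `H (t, y) = ∞` for `y` outside the range of `E (t, ·)`) is continuous, and
in particular it is a pointed homotopy from the collapse map of `E (0, ·)` to
the collapse map of `E (1, ·)`. -/
theorem ptCollapse_isotopy_homotopy {U Y : Type*} [TopologicalSpace U]
    [TopologicalSpace Y] [LocallyCompactSpace Y] [T2Space Y]
    (E : unitInterval × U → Y) (hE : Continuous E)
    (htrack : Topology.IsOpenEmbedding (fun p : unitInterval × U => (p.1, E p))) :
    (∀ t : unitInterval, Topology.IsOpenEmbedding (fun u => E (t, u))) ∧
    Continuous (ptCollapseFamily E) ∧
    (∀ t : unitInterval, ptCollapseFamily E (t, ∞) = ∞) ∧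
    (∀ (t : unitInterval) (u : U),
      ptCollapseFamily E (t, (E (t, u) : OnePoint Y)) = (u : OnePoint U)) ∧
    (∀ (t : unitInterval) (y : Y), (¬ ∃ u, E (t, u) = y) →
      ptCollapseFamily E (t, (y : OnePoint Y)) = ∞) ∧
    (∀ oy : OnePoint Y, ptCollapseFamily E (0, oy) = ptCollapse (fun u => E (0, u)) oy) ∧
    (∀ oy : OnePoint Y, ptCollapseFamily E (1, oy) = ptCollapse (fun u => E (1, u)) oy) :=
  ptCollapse_isotopy_homotopy_general E htrack
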